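/- arXiv:2405.15814 — 2 statements merged into one kernel-verified Lean document; each statement's English description precedes it below -/
import Mathlib

section
/- Let A and B be Hilbert spaces and let T : A → B be a compact linear operator. Then the dual operator T' : B' → A' (between the continuous dual spaces) satisfies e_k(T') = e_k(T) for every k ∈ ℕ, k ≥ 1. -/
noncomputable section

/-- The `k`-th (dyadic) entropy number of a bounded linear operator `T : A → B`:
the infimum of all `ε > 0` such that `T(U_A)` can be covered by `2^(k-1)` closed
balls of radius `ε` in `B`. -/
def entropyNumber {A B : Type*} [NormedAddCommGroup A] [NormedSpace ℂ A]
    [NormedAddCommGroup B] [NormedSpace ℂ B] (k : ℕ) (T : A →L[ℂ] B) : ℝ :=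
  sInf {ε : ℝ | 0 < ε ∧ ∃ b : Fin (2 ^ (k - 1)) → B,
    T '' Metric.closedBall 0 1 ⊆ ⋃ j, Metric.closedBall (b j) ε}

/-- The dual operator `T' : B' → A'` of a bounded linear operator `T : A → B`,
given by `(T' g)(a) = g (T a)`. -/
def dualOp {A B : Type*} [NormedAddCommGroup A] [NormedSpace ℂ A]
    [NormedAddCommGroup B] [NormedSpace ℂ B] (T : A →L[ℂ] B) :
    (B →L[ℂ] ℂ) →L[ℂ] (A →L[ℂ] ℂ) :=
  (ContinuousLinearMap.compL ℂ A B ℂ).flip T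

/-!
Through the Riesz isomorphisms `T'` is `T†` up to isometries, so it suffices to compare `T†`
with `T`. The modulus `|T| = √(T†T)` satisfies `‖|T| x‖ = ‖T x‖`, and in a Hilbert space this
yields contractions `U`, `V` with `T = U |T|` and `|T| = V T`. Hence `T† = |T| U†`, so
`e_k(T†) ≤ e_k(|T|) ≤ e_k(T)`, and applying this to `T†` gives the reverse inequality.
-/

open Metric Set
open scoped InnerProduct

theorem ContinuousLinearMap.exists_norm_le_one_comp_eq_of_norm_le {𝕜 A H F : Type*} [RCLike 𝕜]
    [NormedAddCommGroup A] [NormedSpace 𝕜 A]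
    [NormedAddCommGroup H] [InnerProductSpace 𝕜 H] [CompleteSpace H]
    [NormedAddCommGroup F] [NormedSpace 𝕜 F] [CompleteSpace F]
    (R : A →L[𝕜] H) (S : A →L[𝕜] F) (h : ∀ x, ‖S x‖ ≤ ‖R x‖) :
    ∃ W : H →L[𝕜] F, ‖W‖ ≤ 1 ∧ W ∘L R = S := by
  set K := (LinearMap.range (R : A →ₗ[𝕜] H)).topologicalClosure
  let e : A →ₗ[𝕜] K := (R : A →ₗ[𝕜] H).codRestrict K
    fun x => Submodule.le_topologicalClosure _ (LinearMap.mem_range_self _ x)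
  have he : DenseRange e := by
    refine Topology.IsInducing.subtypeVal.dense_iff.2 fun y => ?_
    rw [← range_comp]
    exact y.2
  have hbound : ∀ x, ‖S x‖ ≤ 1 * ‖e x‖ := fun x => (one_mul ‖e x‖).symm ▸ h x
  let W₀ : K →L[𝕜] F := (S : A →ₗ[𝕜] F).extendOfNorm e
  refine ⟨W₀ ∘L K.orthogonalProjectionOnto, ?_, ?_⟩
  · exact (opNorm_comp_le _ _).trans <| mul_le_one₀
      (LinearMap.opNorm_extendOfNorm_le he zero_le_one hbound) (norm_nonneg _)
      K.orthogonalProjectionOnto_norm_le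
  · ext x
    have hproj : K.orthogonalProjectionOnto (R x) = e x :=
      K.orthogonalProjectionOnto_mem_subspace_eq_self (e x)
    simp only [comp_apply, hproj]
    exact LinearMap.extendOfNorm_eq he ⟨1, hbound⟩ x

section Entropy

variable {A B C D : Type*} [NormedAddCommGroup A] [NormedSpace ℂ A]
  [NormedAddCommGroup B] [NormedSpace ℂ B] [NormedAddCommGroup C] [NormedSpace ℂ C]
  [NormedAddCommGroup D] [NormedSpace ℂ D]

theorem entropyNumber_le_of_image_subset_image {k : ℕ} {S : A →L[ℂ] C} {R : D →L[ℂ] B}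
    {f : B → C} (hf : LipschitzWith 1 f)
    (h : S '' closedBall 0 1 ⊆ f '' (R '' closedBall 0 1)) :
    entropyNumber k S ≤ entropyNumber k R := by
  have hR_cover : 0 < ‖R‖ + 1 ∧ ∃ b : Fin (2 ^ (k - 1)) → B,
      R '' closedBall 0 1 ⊆ ⋃ j, closedBall (b j) (‖R‖ + 1) := by
    refine ⟨by positivity, 0, ?_⟩
    rintro _ ⟨x, hx, rfl⟩
    refine mem_iUnion.2 ⟨⟨0, by positivity⟩, mem_closedBall_zero_iff.2 ?_⟩
    linarith [R.le_opNorm_of_le (mem_closedBall_zero_iff.1 hx)]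
  refine csInf_le_csInf ⟨0, fun _ hε => hε.1.le⟩ ⟨_, hR_cover⟩ ?_
  rintro ε ⟨hε, b, hcov⟩
  refine ⟨hε, f ∘ b, h.trans ?_⟩
  rintro _ ⟨y, hy, rfl⟩
  obtain ⟨j, hj⟩ := mem_iUnion.1 (hcov hy)
  exact mem_iUnion.2 ⟨j, by simpa using hf.mapsTo_closedBall (b j) ε hj⟩

theorem entropyNumber_comp_le_left {k : ℕ} (W : B →L[ℂ] C) (R : A →L[ℂ] B) (hW : ‖W‖ ≤ 1) :
    entropyNumber k (W ∘L R) ≤ entropyNumber k R :=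
  entropyNumber_le_of_image_subset_image
    (W.lipschitzWith_of_opNorm_le (by exact_mod_cast hW)) (image_comp W R _).subset

theorem entropyNumber_comp_le_right {k : ℕ} (S : B →L[ℂ] C) (W : A →L[ℂ] B) (hW : ‖W‖ ≤ 1) :
    entropyNumber k (S ∘L W) ≤ entropyNumber k S := by
  refine entropyNumber_le_of_image_subset_image LipschitzWith.id ?_
  rw [image_id, ContinuousLinearMap.coe_comp, image_comp]
  refine image_mono ?_
  rintro _ ⟨x, hx, rfl⟩
  exact mem_closedBall_zero_iff.2 <| W.le_of_opNorm_le hW x |>.trans (by simpa using hx)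

end Entropy

section Hilbert

variable {A B : Type*} [NormedAddCommGroup A] [InnerProductSpace ℂ A] [CompleteSpace A]
  [NormedAddCommGroup B] [InnerProductSpace ℂ B] [CompleteSpace B]

theorem dualOp_toDual (T : A →L[ℂ] B) (v : B) :
    dualOp T (InnerProductSpace.toDual ℂ B v) = InnerProductSpace.toDual ℂ A ((T†) v) := by
  ext x
  simp [dualOp, ContinuousLinearMap.adjoint_inner_left]

theorem image_dualOp_closedBall (T : A →L[ℂ] B) :
    dualOp T '' closedBall 0 1 = InnerProductSpace.toDual ℂ A '' (T† '' closedBall 0 1) := by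
  rw [← map_zero (InnerProductSpace.toDual ℂ B), ← LinearIsometryEquiv.image_closedBall,
    image_image, image_image]
  simp only [dualOp_toDual]

theorem entropyNumber_dualOp (k : ℕ) (T : A →L[ℂ] B) :
    entropyNumber k (dualOp T) = entropyNumber k (T†) := by
  apply le_antisymm
  · exact entropyNumber_le_of_image_subset_image (InnerProductSpace.toDual ℂ A).lipschitz
      (image_dualOp_closedBall T).subset
  · refine entropyNumber_le_of_image_subset_image (InnerProductSpace.toDual ℂ A).symm.lipschitz ?_
    rw [image_dualOp_closedBall, image_image]
    simp

def ContinuousLinearMap.modulus (T : A →L[ℂ] B) : A →L[ℂ] A := CFC.sqrt (T† ∘L T)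

theorem ContinuousLinearMap.adjoint_modulus (T : A →L[ℂ] B) : T.modulus† = T.modulus :=
  ContinuousLinearMap.isSelfAdjoint_iff'.1 (IsSelfAdjoint.of_nonneg (CFC.sqrt_nonneg _))

theorem ContinuousLinearMap.norm_modulus_apply (T : A →L[ℂ] B) (x : A) :
    ‖T.modulus x‖ = ‖T x‖ := by
  have hsq : T.modulus† ∘L T.modulus = T† ∘L T := by
    rw [T.adjoint_modulus]
    exact CFC.sqrt_mul_sqrt_self _
      ((T† ∘L T).nonneg_iff_isPositive.2 T.isPositive_adjoint_comp_self)
  rw [← sq_eq_sq₀ (norm_nonneg _) (norm_nonneg _),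
    ContinuousLinearMap.apply_norm_sq_eq_inner_adjoint_left,
    ContinuousLinearMap.apply_norm_sq_eq_inner_adjoint_left, hsq]

theorem entropyNumber_adjoint_le (k : ℕ) (T : A →L[ℂ] B) :
    entropyNumber k (T†) ≤ entropyNumber k T := by
  obtain ⟨U, hU, hUT⟩ := T.modulus.exists_norm_le_one_comp_eq_of_norm_le T
    fun x => (T.norm_modulus_apply x).ge
  obtain ⟨V, hV, hVT⟩ := T.exists_norm_le_one_comp_eq_of_norm_le T.modulus
    fun x => (T.norm_modulus_apply x).le
  calc entropyNumber k (T†) = entropyNumber k (T.modulus ∘L (U†)) := by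
        rw [← T.adjoint_modulus, ← ContinuousLinearMap.adjoint_comp, hUT]
    _ ≤ entropyNumber k T.modulus :=
        entropyNumber_comp_le_right _ (U†) (by rwa [LinearIsometryEquiv.norm_map])
    _ = entropyNumber k (V ∘L T) := by rw [hVT]
    _ ≤ entropyNumber k T := entropyNumber_comp_le_left V T hV

end Hilbert

theorem entropyNumber_dualOp_eq_of_hilbert_general {A B : Type*}
    [NormedAddCommGroup A] [InnerProductSpace ℂ A] [CompleteSpace A]
    [NormedAddCommGroup B] [InnerProductSpace ℂ B] [CompleteSpace B]
    (T : A →L[ℂ] B) :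
    ∀ k : ℕ, 1 ≤ k → entropyNumber k (dualOp T) = entropyNumber k T := by
  intro k _
  rw [entropyNumber_dualOp]
  refine le_antisymm (entropyNumber_adjoint_le k T) ?_
  simpa using entropyNumber_adjoint_le k (T†)

theorem entropyNumber_dualOp_eq_of_hilbert {A B : Type*}
    [NormedAddCommGroup A] [InnerProductSpace ℂ A] [CompleteSpace A]
    [NormedAddCommGroup B] [InnerProductSpace ℂ B] [CompleteSpace B]
    (T : A →L[ℂ] B) (hT : IsCompactOperator (⇑T)) :
    ∀ k : ℕ, 1 ≤ k → entropyNumber k (dualOp T) = entropyNumber k T :=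
  entropyNumber_dualOp_eq_of_hilbert_general T
end
end

section
/- (Carl's inequality) Let K : B → B be a compact linear operator on an infinite-dimensional complex Banach space B and let (λ_k(K))_{k≥1} be an eigenvalue sequence of K. Then |λ_k(K)| ≤ √2 · e_k(K) for every k ∈ ℕ, k ≥ 1. -/
noncomputable section

/-- The algebraic multiplicity of `z` as an eigenvalue of `K`: the dimension of
`{b : B | (K - z·id)^m b = 0 for some m}`. -/
def algMult {B : Type*} [NormedAddCommGroup B] [NormedSpace ℂ B]
    (K : B →L[ℂ] B) (z : ℂ) : ℕ :=
  Module.finrank ℂ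
    ↥(⨆ m : ℕ, LinearMap.ker (((K : B →ₗ[ℂ] B) - z • LinearMap.id) ^ m))

/-- `lam` (indexed from `1`; the value at `0` is irrelevant) is an eigenvalue sequence of
the compact operator `K`: the moduli are nonincreasing, every nonzero term is an
eigenvalue of `K`, and every nonzero eigenvalue `z` of `K` occurs in the sequence
exactly as many times as its (finite) algebraic multiplicity. -/
def IsEigenvalueSequence {B : Type*} [NormedAddCommGroup B] [NormedSpace ℂ B]
    (K : B →L[ℂ] B) (lam : ℕ → ℂ) : Prop :=
  (∀ k : ℕ, 1 ≤ k → ‖lam (k + 1)‖ ≤ ‖lam k‖) ∧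
  (∀ k : ℕ, 1 ≤ k → lam k ≠ 0 → ∃ b : B, b ≠ 0 ∧ K b = lam k • b) ∧
  (∀ z : ℂ, z ≠ 0 → (∃ b : B, b ≠ 0 ∧ K b = z • b) →
    {k : ℕ | 1 ≤ k ∧ lam k = z}.Finite ∧
      Nat.card {k : ℕ | 1 ≤ k ∧ lam k = z} = algMult K z)

/-!
If `λ_k ≠ 0`, the generalized eigenspaces of `K` for the values `λ_1, …, λ_k` span a
`K`-invariant subspace `M` of complex dimension `n ≥ k` on which every eigenvalue of `K|_M` has
modulus at least `|λ_k|`, so that `|det_ℝ (K|_M)| = |det_ℂ (K|_M)|² ≥ |λ_k|^(2n)`.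
A covering of `K(U_B)` by `2^(k-1)` balls of radius `ε` iterates to a covering of `K^m(U_B)` by
`2^((k-1)m)` balls of radius `ε^m`, which restricts to `M` at the cost of doubling the radius.
Comparing Lebesgue volumes in the `2n`-dimensional real space `M` gives
`|λ_k|^(2nm) ≤ 2^((k-1)m) (2ε^m)^(2n)`; letting `m → ∞` and using `n ≥ k` yields `|λ_k|² ≤ 2ε²`.
-/

open Module Metric Set MeasureTheory
open scoped Finset ENNReal

theorem Isometry.exists_cover_closedBall_two_mul {α β ι : Type*} [PseudoMetricSpace α]
    [PseudoMetricSpace β] [Nonempty α] {g : α → β} (hg : Isometry g) {s : Set α} {c : ι → β}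
    {r : ℝ} (hs : g '' s ⊆ ⋃ i, closedBall (c i) r) :
    ∃ c' : ι → α, s ⊆ ⋃ i, closedBall (c' i) (2 * r) := by
  classical
  refine ⟨fun i => if h : ∃ x ∈ s, g x ∈ closedBall (c i) r then h.choose
    else Classical.arbitrary α, fun x hx => ?_⟩
  obtain ⟨i, hi⟩ := mem_iUnion.mp (hs (mem_image_of_mem g hx))
  have h : ∃ x ∈ s, g x ∈ closedBall (c i) r := ⟨x, hx, hi⟩
  refine mem_iUnion.mpr ⟨i, ?_⟩
  simp only [dif_pos h]
  rw [mem_closedBall, ← hg.dist_eq, two_mul]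
  exact dist_triangle_right _ _ (c i) |>.trans (add_le_add hi h.choose_spec.2)

section Cover

variable {E : Type*} [NormedAddCommGroup E] [NormedSpace ℝ E] {ι : Type*}

theorem ContinuousLinearMap.image_closedBall_subset_of_cover (T : E →L[ℝ] E) {b : ι → E}
    {ε : ℝ} (hcov : T '' closedBall 0 1 ⊆ ⋃ j, closedBall (b j) ε) (a : E) {ρ : ℝ} (hρ : 0 < ρ) :
    T '' closedBall a ρ ⊆ ⋃ j, closedBall (T a + ρ • b j) (ρ * ε) := by
  rintro _ ⟨x, hx, rfl⟩
  have hu : ρ⁻¹ • (x - a) ∈ closedBall (0 : E) 1 := by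
    rw [mem_closedBall_zero_iff, norm_smul, norm_inv, Real.norm_of_nonneg hρ.le,
      inv_mul_le_one₀ hρ, ← dist_eq_norm]
    exact hx
  obtain ⟨j, hj⟩ := mem_iUnion.mp (hcov (mem_image_of_mem T hu))
  refine mem_iUnion.mpr ⟨j, ?_⟩
  have hx : T x = T a + ρ • T (ρ⁻¹ • (x - a)) := by
    rw [map_smul, smul_inv_smul₀ hρ.ne', map_sub, add_sub_cancel]
  rw [mem_closedBall, hx, dist_add_left, dist_smul₀, Real.norm_of_nonneg hρ.le]
  exact mul_le_mul_of_nonneg_left hj hρ.le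

theorem ContinuousLinearMap.iterate_image_closedBall_subset (T : E →L[ℝ] E) {b : ι → E}
    {ε : ℝ} (hε : 0 < ε) (hcov : T '' closedBall 0 1 ⊆ ⋃ j, closedBall (b j) ε) (m : ℕ) :
    ∃ c : (Fin m → ι) → E, T^[m] '' closedBall 0 1 ⊆ ⋃ τ, closedBall (c τ) (ε ^ m) := by
  induction m with
  | zero => exact ⟨fun _ => 0, fun x hx => mem_iUnion.mpr ⟨finZeroElim, by simpa using hx⟩⟩
  | succ m ih =>
    obtain ⟨c, hc⟩ := ih
    refine ⟨fun τ => T (c (Fin.init τ)) + ε ^ m • b (τ (Fin.last m)), ?_⟩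
    rw [Function.iterate_succ', image_comp]
    refine (image_mono hc).trans ?_
    simp only [image_iUnion, iUnion_subset_iff]
    intro τ
    refine (T.image_closedBall_subset_of_cover hcov (c τ) (pow_pos hε m)).trans ?_
    refine iUnion_subset fun j => subset_iUnion_of_subset (Fin.snoc τ j) ?_
    simp [Fin.init_snoc, Fin.snoc_last, pow_succ]

end Cover

theorem abs_det_le_of_image_closedBall_subset {E : Type*} [NormedAddCommGroup E]
    [NormedSpace ℝ E] [FiniteDimensional ℝ E] (g : E →ₗ[ℝ] E) {ι : Type*} [Fintype ι]
    (c : ι → E) {r : ℝ} (hr : 0 ≤ r) (hcov : g '' closedBall 0 1 ⊆ ⋃ i, closedBall (c i) r) :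
    |LinearMap.det g| ≤ Fintype.card ι * r ^ finrank ℝ E := by
  borelize E
  let μ := (finBasis ℝ E).addHaar
  have hball₀ : μ (closedBall 0 1) ≠ 0 := (measure_closedBall_pos μ 0 one_pos).ne'
  have hball : μ (closedBall 0 1) ≠ ∞ := measure_closedBall_lt_top.ne
  have hvol : ENNReal.ofReal |LinearMap.det g| * μ (closedBall 0 1) ≤
      ENNReal.ofReal (Fintype.card ι * r ^ finrank ℝ E) * μ (closedBall 0 1) :=
    calc ENNReal.ofReal |LinearMap.det g| * μ (closedBall 0 1)
        = μ (g '' closedBall 0 1) := (μ.addHaar_image_linearMap g _).symm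
      _ ≤ ∑ i, μ (closedBall (c i) r) := (measure_mono hcov).trans (measure_iUnion_fintype_le _ _)
      _ = ENNReal.ofReal (Fintype.card ι * r ^ finrank ℝ E) * μ (closedBall 0 1) := by
          simp_rw [μ.addHaar_closedBall' _ hr, Finset.sum_const, Finset.card_univ, nsmul_eq_mul,
            ← mul_assoc, ENNReal.ofReal_mul (Nat.cast_nonneg _), ENNReal.ofReal_natCast]
  exact (ENNReal.ofReal_le_ofReal_iff (by positivity)).mp
    ((ENNReal.mul_le_mul_iff_left hball₀ hball).mp hvol)

theorem le_of_forall_pow_le_mul_pow {a b C : ℝ} (hb : 0 ≤ b) (h : ∀ m : ℕ, a ^ m ≤ C * b ^ m) :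
    a ≤ b := by
  by_contra! hba
  rcases hb.eq_or_lt with rfl | hb
  · have h1 := h 1
    rw [pow_one, zero_pow one_ne_zero, mul_zero] at h1
    exact h1.not_gt hba
  obtain ⟨m, hm⟩ := pow_unbounded_of_one_lt C ((one_lt_div hb).mpr hba)
  rw [div_pow, lt_div_iff₀ (pow_pos hb m)] at hm
  exact (h m).not_gt hm

namespace Module.End

section
variable {V : Type*} [AddCommGroup V] [Module ℂ V] [FiniteDimensional ℂ V]

theorem pow_finrank_le_norm_det (f : End ℂ V) {r : ℝ} (hr : 0 ≤ r)
    (hf : ∀ μ, f.HasEigenvalue μ → r ≤ ‖μ‖) : r ^ finrank ℂ V ≤ ‖LinearMap.det f‖ := by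
  have hsplit := IsAlgClosed.splits f.charpoly
  rw [det_eq_prod_roots_charpoly_of_splits hsplit, ← LinearMap.charpoly_natDegree f,
    hsplit.natDegree_eq_card_roots, ← Multiset.prod_replicate, ← Multiset.map_const',
    ← normHom_apply, map_multiset_prod]
  refine Multiset.prod_map_le_prod_map₀ _ _ (fun _ _ => hr) fun μ hμ => hf μ ?_
  exact (hasEigenvalue_iff_isRoot_charpoly f μ).mpr (Polynomial.isRoot_of_mem_roots hμ)

theorem abs_det_restrictScalars_real (f : End ℂ V) :
    |LinearMap.det (f.restrictScalars ℝ)| = ‖LinearMap.det f‖ ^ 2 := by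
  rw [LinearMap.det_restrictScalars, Algebra.norm_complex_apply, Complex.normSq_eq_norm_sq,
    abs_of_nonneg (sq_nonneg _)]

end

theorem pow_le_card_mul_pow_of_forall_iterate_cover {V : Type*} [NormedAddCommGroup V]
    [NormedSpace ℂ V] [FiniteDimensional ℂ V] (f : End ℂ V) {ι : Type*} [Fintype ι] {r ε : ℝ}
    (hr : 0 ≤ r) (hε : 0 ≤ ε) (heig : ∀ μ, f.HasEigenvalue μ → r ≤ ‖μ‖)
    (hcov : ∀ m, ∃ c : (Fin m → ι) → V,
      ⇑(f ^ m) '' closedBall 0 1 ⊆ ⋃ τ, closedBall (c τ) (2 * ε ^ m)) :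
    r ^ (2 * finrank ℂ V) ≤ Fintype.card ι * ε ^ (2 * finrank ℂ V) := by
  set n := finrank ℂ V with hn
  refine le_of_forall_pow_le_mul_pow (C := 2 ^ (2 * n)) (by positivity) fun m => ?_
  obtain ⟨c, hc⟩ := hcov m
  calc (r ^ (2 * n)) ^ m = ((r ^ n) ^ m) ^ 2 := by ring
    _ ≤ (‖LinearMap.det f‖ ^ m) ^ 2 := by
        gcongr
        exact f.pow_finrank_le_norm_det hr heig
    _ = |LinearMap.det ((f ^ m).restrictScalars ℝ)| := by
        rw [abs_det_restrictScalars_real, map_pow, norm_pow]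
    _ ≤ Fintype.card (Fin m → ι) * (2 * ε ^ m) ^ finrank ℝ V :=
        abs_det_le_of_image_closedBall_subset _ c (by positivity) hc
    _ = 2 ^ (2 * n) * (Fintype.card ι * ε ^ (2 * n)) ^ m := by
        rw [finrank_real_of_complex, ← hn, Fintype.card_fun, Fintype.card_fin]
        push_cast
        ring

end Module.End

theorem iSupIndep.finrank_finset_sup {K V ι : Type*} [DivisionRing K] [AddCommGroup V]
    [Module K V] {p : ι → Submodule K V} (hp : iSupIndep p) (s : Finset ι)
    (hs : ∀ i ∈ s, FiniteDimensional K (p i)) :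
    finrank K (s.sup p : Submodule K V) = ∑ i ∈ s, finrank K (p i) := by
  classical
  induction s using Finset.induction_on with
  | empty => rw [Finset.sup_empty, finrank_bot, Finset.sum_empty]
  | insert a s ha ih =>
    have hsfd : ∀ i ∈ s, FiniteDimensional K (p i) := fun i hi => hs i (Finset.mem_insert_of_mem hi)
    have : FiniteDimensional K (p a) := hs a (Finset.mem_insert_self a s)
    have : FiniteDimensional K (s.sup p : Submodule K V) := Module.Finite.iff_fg.mpr
      (Submodule.fg_finset_sup s p fun i hi => Module.Finite.iff_fg.mp (hsfd i hi))
    have hdisj : Disjoint (p a) (s.sup p : Submodule K V) := by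
      rw [Finset.sup_eq_iSup]
      exact hp.disjoint_biSup (y := ↑s) ha
    rw [Finset.sup_insert, Finset.sum_insert ha, ← ih hsfd,
      ← Submodule.finrank_sup_add_finrank_inf_eq, hdisj.eq_bot, finrank_bot, add_zero]

theorem algMult_eq_finrank_maxGenEigenspace {B : Type*} [NormedAddCommGroup B] [NormedSpace ℂ B]
    (K : B →L[ℂ] B) (z : ℂ) :
    algMult K z = finrank ℂ (Module.End.maxGenEigenspace (K : B →ₗ[ℂ] B) z) := by
  have h : ⨆ m : ℕ, LinearMap.ker (((K : B →ₗ[ℂ] B) - z • LinearMap.id) ^ m) =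
      Module.End.maxGenEigenspace (K : B →ₗ[ℂ] B) z := by
    rw [← Module.End.iSup_genEigenspace_eq]
    exact iSup_congr fun m => Module.End.genEigenspace_nat.symm
  rw [algMult, h]

namespace IsEigenvalueSequence

variable {B : Type*} [NormedAddCommGroup B] [NormedSpace ℂ B] {K : B →L[ℂ] B} {lam : ℕ → ℂ}

theorem norm_le_norm_of_le (hlam : IsEigenvalueSequence K lam) {i j : ℕ} (hi : 1 ≤ i)
    (hij : i ≤ j) :
    ‖lam j‖ ≤ ‖lam i‖ := by
  induction j, hij using Nat.le_induction with
  | base => rfl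
  | succ j hij ih => exact (hlam.1 j (hi.trans hij)).trans ih

theorem card_filter_le_finrank (hlam : IsEigenvalueSequence K lam) {j : ℕ} (hj : 1 ≤ j)
    (hj0 : lam j ≠ 0) (s : Finset ℕ) (hs : ∀ i ∈ s, 1 ≤ i) :
    #{i ∈ s | lam i = lam j} ≤ finrank ℂ (Module.End.maxGenEigenspace (K : B →ₗ[ℂ] B) (lam j)) := by
  obtain ⟨hfin, hcard⟩ := hlam.2.2 (lam j) hj0 (hlam.2.1 j hj hj0)
  rw [← algMult_eq_finrank_maxGenEigenspace, ← hcard, Nat.card_coe_set_eq, ← Set.ncard_coe_finset]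
  refine Set.ncard_le_ncard (fun i hi => ?_) hfin
  rw [Finset.coe_filter] at hi
  exact ⟨hs i hi.1, hi.2⟩

theorem exists_invariant_submodule (hlam : IsEigenvalueSequence K lam) {k : ℕ} (hk0 : lam k ≠ 0) :
    ∃ (M : Submodule ℂ B) (hM : ∀ x ∈ M, K x ∈ M), FiniteDimensional ℂ M ∧ k ≤ finrank ℂ M ∧
      ∀ μ, Module.End.HasEigenvalue ((K : B →ₗ[ℂ] B).restrict hM) μ → ‖lam k‖ ≤ ‖μ‖ := by
  classical
  set f : Module.End ℂ B := (K : B →ₗ[ℂ] B)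
  set G := f.maxGenEigenspace
  set S := (Finset.Icc 1 k).image lam
  have hlarge : ∀ j ∈ Finset.Icc 1 k, ‖lam k‖ ≤ ‖lam j‖ := fun j hj =>
    hlam.norm_le_norm_of_le (Finset.mem_Icc.mp hj).1 (Finset.mem_Icc.mp hj).2
  have hcount : ∀ j ∈ Finset.Icc 1 k,
      #{i ∈ Finset.Icc 1 k | lam i = lam j} ≤ finrank ℂ (G (lam j)) :=
    fun j hj => hlam.card_filter_le_finrank (Finset.mem_Icc.mp hj).1
      (norm_pos_iff.mp ((norm_pos_iff.mpr hk0).trans_le (hlarge j hj))) _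
      fun i hi => (Finset.mem_Icc.mp hi).1
  -- `finrank` vanishes on infinite-dimensional spaces, so a positive count forces finiteness.
  have hfd : ∀ z ∈ S, FiniteDimensional ℂ (G z) := by
    simp only [S, Finset.forall_mem_image]
    refine fun j hj => Module.finite_of_finrank_pos (lt_of_lt_of_le ?_ (hcount j hj))
    exact Finset.card_pos.mpr ⟨j, Finset.mem_filter.mpr ⟨hj, rfl⟩⟩
  have hM : ∀ x ∈ S.sup G, f x ∈ S.sup G := by
    show S.sup G ≤ (S.sup G).comap f
    refine Finset.sup_le fun z hz => le_trans ?_ (Submodule.comap_mono (Finset.le_sup hz))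
    exact fun x hx => Module.End.mapsTo_maxGenEigenspace_of_comm (Commute.refl f) z hx
  refine ⟨S.sup G, hM, Module.Finite.iff_fg.mpr
      (Submodule.fg_finset_sup S G fun z hz => Module.Finite.iff_fg.mp (hfd z hz)), ?_, ?_⟩
  · rw [(Module.End.independent_maxGenEigenspace f).finrank_finset_sup S hfd]
    calc k = #(Finset.Icc 1 k) := by simp
      _ = ∑ z ∈ S, #{i ∈ Finset.Icc 1 k | lam i = z} := Finset.card_eq_sum_card_image _ _
      _ ≤ ∑ z ∈ S, finrank ℂ (G z) := by
        refine Finset.sum_le_sum ?_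
        simp only [S, Finset.forall_mem_image]
        exact hcount
  · intro μ hμ
    obtain ⟨v, hv⟩ := hμ.exists_hasEigenvector
    have hvG : (v : B) ∈ G μ := by
      refine (Module.End.mem_maxGenEigenspace f μ v).mpr ⟨1, ?_⟩
      have := congrArg Subtype.val hv.apply_eq_smul
      simpa [sub_eq_zero, f] using this
    have hμS : μ ∈ S := by
      by_contra hμS
      have hdisj : Disjoint (G μ) (S.sup G) := by
        rw [Finset.sup_eq_iSup]
        exact (Module.End.independent_maxGenEigenspace f).disjoint_biSup (y := ↑S) hμS
      exact hv.2 (Subtype.ext (Submodule.disjoint_def.mp hdisj _ hvG v.2))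
    obtain ⟨j, hj, rfl⟩ := Finset.mem_image.mp hμS
    exact hlarge j hj

theorem norm_le_sqrt_two_mul_of_cover (hlam : IsEigenvalueSequence K lam) {k : ℕ} (hk : 1 ≤ k)
    {ε : ℝ} (hε : 0 < ε) {b : Fin (2 ^ (k - 1)) → B}
    (hcov : K '' closedBall 0 1 ⊆ ⋃ j, closedBall (b j) ε) :
    ‖lam k‖ ≤ Real.sqrt 2 * ε := by
  by_cases hk0 : lam k = 0
  · rw [hk0, norm_zero]
    positivity
  obtain ⟨M, hM, hMfd, hkM, heig⟩ := hlam.exists_invariant_submodule hk0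
  set f := (K : B →ₗ[ℂ] B).restrict hM
  have hfcov : ∀ m, ∃ c : (Fin m → Fin (2 ^ (k - 1))) → M,
      ⇑(f ^ m) '' closedBall 0 1 ⊆ ⋃ τ, closedBall (c τ) (2 * ε ^ m) := by
    intro m
    obtain ⟨c, hc⟩ := (K.restrictScalars ℝ).iterate_image_closedBall_subset hε hcov m
    refine isometry_subtype_coe.exists_cover_closedBall_two_mul (subset_trans ?_ hc)
    rintro _ ⟨_, ⟨x, hx, rfl⟩, rfl⟩
    refine ⟨x, by simpa using hx, ?_⟩
    rw [Module.End.pow_restrict, LinearMap.coe_restrict_apply, Module.End.pow_apply]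
    rfl
  have key :=
    Module.End.pow_le_card_mul_pow_of_forall_iterate_cover f (norm_nonneg _) hε.le heig hfcov
  set n := finrank ℂ M
  rw [Fintype.card_fin, Nat.cast_pow, Nat.cast_ofNat] at key
  have hsq : (‖lam k‖ ^ 2) ^ n ≤ (2 * ε ^ 2) ^ n :=
    calc (‖lam k‖ ^ 2) ^ n = ‖lam k‖ ^ (2 * n) := by ring
      _ ≤ 2 ^ (k - 1) * ε ^ (2 * n) := key
      _ ≤ 2 ^ n * ε ^ (2 * n) := by gcongr; exacts [one_le_two, by omega]
      _ = (2 * ε ^ 2) ^ n := by ring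
  rw [← pow_le_pow_iff_left₀ (norm_nonneg _) (by positivity) two_ne_zero, mul_pow,
    Real.sq_sqrt zero_le_two]
  exact (pow_le_pow_iff_left₀ (by positivity) (by positivity) (by omega)).mp hsq

end IsEigenvalueSequence

theorem le_entropyNumber {A B : Type*} [NormedAddCommGroup A] [NormedSpace ℂ A]
    [NormedAddCommGroup B] [NormedSpace ℂ B] (T : A →L[ℂ] B) {k : ℕ} {a : ℝ}
    (h : ∀ ε > 0, ∀ b : Fin (2 ^ (k - 1)) → B,
      T '' closedBall 0 1 ⊆ ⋃ j, closedBall (b j) ε → a ≤ ε) :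
    a ≤ entropyNumber k T := by
  refine le_csInf ⟨‖T‖ + 1, by positivity, fun _ => 0, ?_⟩ fun ε ⟨hε, b, hb⟩ => h ε hε b hb
  rintro _ ⟨x, hx, rfl⟩
  refine mem_iUnion.mpr ⟨⟨0, Nat.two_pow_pos _⟩, ?_⟩
  rw [mem_closedBall_zero_iff] at hx ⊢
  exact (T.le_opNorm x).trans (by nlinarith [norm_nonneg T])

theorem carl_inequality_general {B : Type*} [NormedAddCommGroup B] [NormedSpace ℂ B]
    (K : B →L[ℂ] B)
    (lam : ℕ → ℂ) (hlam : IsEigenvalueSequence K lam)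
    (k : ℕ) (hk : 1 ≤ k) :
    ‖lam k‖ ≤ Real.sqrt 2 * entropyNumber k K := by
  have hsqrt : 0 < Real.sqrt 2 := by positivity
  rw [← div_le_iff₀' hsqrt]
  exact le_entropyNumber K fun ε hε b hcov =>
    (div_le_iff₀' hsqrt).mpr (hlam.norm_le_sqrt_two_mul_of_cover hk hε hcov)

/-- Carl's inequality. -/
theorem carl_inequality {B : Type*} [NormedAddCommGroup B] [NormedSpace ℂ B]
    [CompleteSpace B] (hB : ¬ FiniteDimensional ℂ B)
    (K : B →L[ℂ] B) (hK : IsCompactOperator (⇑K))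
    (lam : ℕ → ℂ) (hlam : IsEigenvalueSequence K lam)
    (k : ℕ) (hk : 1 ≤ k) :
    ‖lam k‖ ≤ Real.sqrt 2 * entropyNumber k K :=
  carl_inequality_general K lam hlam k hk
end
end
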